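/- The two 3-dimensional complex associative algebras A (nonzero products e1e3 = e2, e2e3 = e2, e3e3 = e3) and B (nonzero products e3e1 = e2, e3e2 = e2, e3e3 = e3) are opposite algebras of each other and are not isomorphic. -/
import Mathlib


/-- Algebra A: e1e3 = e2, e2e3 = e2, e3e3 = e3. -/
def mulA (x y : Fin 3 → ℂ) : Fin 3 → ℂ :=
  fun k => if k = 1 then x 0 * y 2 + x 1 * y 2 else if k = 2 then x 2 * y 2 else 0

/-- Algebra B: e3e1 = e2, e3e2 = e2, e3e3 = e3. -/
def mulB (x y : Fin 3 → ℂ) : Fin 3 → ℂ :=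
  fun k => if k = 1 then x 2 * y 0 + x 2 * y 1 else if k = 2 then x 2 * y 2 else 0

theorem stmt13 :
    (∀ x y z, mulA (mulA x y) z = mulA x (mulA y z)) ∧
    (∀ x y z, mulB (mulB x y) z = mulB x (mulB y z)) ∧
    (∀ x y, mulB x y = mulA y x) ∧
    ¬ ∃ f : (Fin 3 → ℂ) ≃ₗ[ℂ] (Fin 3 → ℂ),
        ∀ x y, f (mulA x y) = mulB (f x) (f y) := by
  refine ⟨?_, ?_, ?_, ?_⟩
  · intro x y z; funext k; simp only [mulA]; split_ifs <;> simp_all <;> ring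
  · intro x y z; funext k; simp only [mulB]; split_ifs <;> simp_all <;> ring
  · intro x y; funext k; simp only [mulA, mulB]; split_ifs <;> ring
  · rintro ⟨f, hf⟩
    set e0 : Fin 3 → ℂ := fun i => if i = 0 then 1 else 0 with he0
    set e1 : Fin 3 → ℂ := fun i => if i = 1 then 1 else 0 with he1
    set e2 : Fin 3 → ℂ := fun i => if i = 2 then 1 else 0 with he2
    have hB0 : ∀ w, mulB e0 w = 0 := by
      intro w; funext k; simp [mulB, he0]
    have hB1 : ∀ w, mulB e1 w = 0 := by
      intro w; funext k; simp [mulB, he1]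
    set u0 := f.symm e0 with hu0
    set u1 := f.symm e1 with hu1
    have hA0 : ∀ y, mulA u0 y = 0 := by
      intro y
      apply f.injective
      rw [hf, map_zero, hu0, f.apply_symm_apply, hB0]
    have hA1 : ∀ y, mulA u1 y = 0 := by
      intro y
      apply f.injective
      rw [hf, map_zero, hu1, f.apply_symm_apply, hB1]
    have h01 : u0 0 + u0 1 = 0 := by
      have := congrFun (hA0 e2) 1
      simpa [mulA, he2] using this
    have h11 : u1 0 + u1 1 = 0 := by
      have := congrFun (hA1 e2) 1
      simpa [mulA, he2] using this
    have hw : (u1 0) • u0 - (u0 0) • u1 = 0 := by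
      funext k
      fin_cases k <;>
        simp only [Pi.sub_apply, Pi.smul_apply, smul_eq_mul, Pi.zero_apply]
      · show u1 0 * u0 0 - u0 0 * u1 0 = 0
        ring
      · show u1 0 * u0 1 - u0 0 * u1 1 = 0
        have e1' : u0 1 = -(u0 0) := by linear_combination h01
        have e2' : u1 1 = -(u1 0) := by linear_combination h11
        rw [e1', e2']; ring
      · show u1 0 * u0 2 - u0 0 * u1 2 = 0
        have := congrFun (hA0 e2) 2
        have h2 : u0 2 = 0 := by simpa [mulA, he2] using this
        have := congrFun (hA1 e2) 2
        have h2' : u1 2 = 0 := by simpa [mulA, he2] using this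
        rw [h2, h2']; ring
    have hfw : (u1 0) • e0 - (u0 0) • e1 = 0 := by
      have := congrArg f hw
      rw [map_sub, map_smul, map_smul, map_zero, hu0, hu1,
        f.apply_symm_apply, f.apply_symm_apply] at this
      exact this
    have ha : u1 0 = 0 := by
      have := congrFun hfw 0
      simpa [he0, he1] using this
    have hb : u0 0 = 0 := by
      have := congrFun hfw 1
      simpa [he0, he1] using this
    have hu0z : u0 = 0 := by
      funext k
      fin_cases k
      · exact hb
      · show u0 1 = 0
        have : u0 1 = -(u0 0) := by linear_combination h01
        rw [this, hb]; ring
      · show u0 2 = (0 : Fin 3 → ℂ) 2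
        have := congrFun (hA0 e2) 2
        simpa [mulA, he2] using this
    have : e0 = 0 := by
      have := congrArg f (hu0z)
      rw [hu0, f.apply_symm_apply, map_zero] at this
      exact this
    have := congrFun this 0
    simp [he0] at this
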